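/- arXiv:1307.2937 — 2 statements merged into one kernel-verified Lean document; each statement's English description precedes it below -/
import Mathlib

section
/- Let F be a perfect analytic field of characteristic p with norm |·|' and let z ∈ W(o_F) be primitive. Then every class in W(o_F)/(z) is represented by a stable element of W(o_F). -/
open scoped NNReal ENNReal

set_option synthInstance.maxHeartbeats 1000000
set_option maxHeartbeats 1000000

/-- The valuation ring `o_F` of an analytic field `F` (a field complete with respect to a
multiplicative nonarchimedean norm, given by a rank-one valuation). -/
noncomputable abbrev OK (F : Type*) [Field F] [Valued F ℝ≥0] : Subring F :=
  Valued.v.integer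

/-- The norm `|x̄_n|'` of the `n`-th Teichmüller coordinate of a Witt vector
`x = Σ pⁿ [x̄_n] ∈ W(o_F)` over a perfect field: since `x̄_n = (x.coeff n)^(p⁻ⁿ)`,
this is `|x.coeff n|'^(p⁻ⁿ)`. -/
noncomputable def tcNorm (p : ℕ) [Fact p.Prime] (F : Type*) [Field F] [Valued F ℝ≥0]
    (x : WittVector p (OK F)) (n : ℕ) : ℝ≥0 :=
  Valued.v ((x.coeff n : OK F) : F) ^ ((((p : ℝ))⁻¹ ^ n : ℝ))

/-- A Witt vector `x = Σ pⁿ [x̄_n] ∈ W(o_F)` is stable if `|x̄_n|' ≤ |x̄_0|'`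
for all `n > 0`. -/
def IsStable (p : ℕ) [Fact p.Prime] (F : Type*) [Field F] [Valued F ℝ≥0]
    (x : WittVector p (OK F)) : Prop :=
  ∀ n : ℕ, 0 < n → tcNorm p F x n ≤ tcNorm p F x 0

/-- A Witt vector `z = Σ pⁿ [z̄_n] ∈ W(o_F)` is primitive if `|z̄_0|' = p⁻¹` and
`|z̄_1|' = 1`; in terms of Witt coordinates, `|z.coeff 0|' = p⁻¹` and `|z.coeff 1|' = 1`. -/
def IsPrimitive (p : ℕ) [Fact p.Prime] (F : Type*) [Field F] [Valued F ℝ≥0]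
    (z : WittVector p (OK F)) : Prop :=
  Valued.v ((z.coeff 0 : OK F) : F) = (p : ℝ≥0)⁻¹ ∧
  Valued.v ((z.coeff 1 : OK F) : F) = 1

/-!
Kedlaya's division algorithm. Over the perfect ring `o_F` write `w = [w̄₀] + p·w'` with
`w' = pTail w`. For primitive `z = [z̄₀] + p·u` the element `u` is a unit because `|z̄₁|' = 1`, and
`w ≡ [w̄₀] - [z̄₀]·u⁻¹·w' (mod z)`. Bounds on the Teichmüller coordinates are encoded as
divisibility by Teichmüller representatives, since `([b]·y)ₙ = b^{pⁿ}·yₙ`. If `[a] ∣ w`, the new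
element is stable when `|w̄₀|' > |z̄₀ a|'`, and divisible by `[z̄₀ a]` otherwise. Iterating from
`x`, either a stable element appears, or the `k`-th iterate is divisible by `[z̄₀ᵏ]`; then the
partial quotients converge coordinatewise in the complete ring `o_F` to some `q` with `x = z q`,
and `0` is a stable representative.
-/

namespace WittVector

variable {p : ℕ} [Fact p.Prime] {R : Type*} [CommRing R]

local notation "𝕎" => WittVector p

theorem sub_coeff_zero (x y : 𝕎 R) : (x - y).coeff 0 = x.coeff 0 - y.coeff 0 := by
  rw [eq_sub_iff_add_eq, ← add_coeff_zero, sub_add_cancel]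

theorem map_mk_eq_map_mk_iff {I : Ideal R} {x y : 𝕎 R} :
    map (Ideal.Quotient.mk I) x = map (Ideal.Quotient.mk I) y ↔
      ∀ n, x.coeff n - y.coeff n ∈ I := by
  simp only [WittVector.ext_iff, map_coeff, Ideal.Quotient.eq]

theorem map_mk_span_eq_zero_of_teichmuller_dvd {a : R} {x : 𝕎 R} (h : teichmuller p a ∣ x) :
    map (Ideal.Quotient.mk (Ideal.span {a})) x = 0 := by
  obtain ⟨c, rfl⟩ := h
  rw [map_mul, map_teichmuller,
    Ideal.Quotient.eq_zero_iff_mem.mpr (Ideal.mem_span_singleton_self a), teichmuller_zero,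
    zero_mul]

theorem isUnit_of_isUnit_coeff_zero [CharP R p] {x : 𝕎 R} (h : IsUnit (x.coeff 0)) : IsUnit x :=
  (mkUnit h.unit_spec.symm).isUnit

variable [CharP R p] [PerfectRing R p]

noncomputable def pTail (x : 𝕎 R) : 𝕎 R :=
  mk p fun n ↦ (_root_.frobeniusEquiv R p).symm (x.coeff (n + 1))

theorem pTail_coeff_pow (x : 𝕎 R) (n : ℕ) : (pTail x).coeff n ^ p = x.coeff (n + 1) :=
  frobeniusEquiv_symm_pow_p R p _

theorem teichmuller_add_pTail_mul_p (x : 𝕎 R) :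
    teichmuller p (x.coeff 0) + pTail x * p = x := by
  ext (_ | n)
  · rw [add_coeff_zero, teichmuller_coeff_zero, mul_charP_coeff_zero, add_zero]
  · rw [coeff_add_of_disjoint, teichmuller_coeff_pos p _ _ n.succ_pos, zero_add,
      mul_charP_coeff_succ, pTail_coeff_pow]
    rintro (_ | k)
    · exact .inr (mul_charP_coeff_zero _)
    · exact .inl (teichmuller_coeff_pos p _ _ k.succ_pos)

theorem mul_p_injective : Function.Injective fun x : 𝕎 R ↦ x * p := by
  intro x y h
  ext n
  apply injective_pow_p R p
  rw [← mul_charP_coeff_succ, ← mul_charP_coeff_succ]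
  exact congrArg (coeff · (n + 1)) h

theorem pTail_teichmuller_mul (a : R) (x : 𝕎 R) :
    pTail (teichmuller p a * x) = teichmuller p a * pTail x := by
  apply mul_p_injective
  have hx := teichmuller_add_pTail_mul_p x
  have hax := teichmuller_add_pTail_mul_p (teichmuller p a * x)
  rw [mul_coeff_zero, teichmuller_coeff_zero, map_mul] at hax
  dsimp only
  linear_combination hax - teichmuller p a * hx

theorem teichmuller_mul_coeff (a : R) (x : 𝕎 R) (n : ℕ) :
    (teichmuller p a * x).coeff n = a ^ p ^ n * x.coeff n := by
  induction n generalizing x with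
  | zero => simp [mul_coeff_zero]
  | succ n ih =>
    rw [← pTail_coeff_pow, pTail_teichmuller_mul, ih, mul_pow, pTail_coeff_pow, ← pow_mul,
      ← pow_succ]

theorem teichmuller_dvd_pTail {a : R} {x : 𝕎 R} (h : teichmuller p a ∣ x) :
    teichmuller p a ∣ pTail x := by
  obtain ⟨c, rfl⟩ := h
  exact ⟨pTail c, pTail_teichmuller_mul a c⟩

-- `Ring.inverse` is `0` on non-units; `divisionStep_eq` assumes `pTail z` is a unit.
noncomputable def divisionQuot (z w : 𝕎 R) : 𝕎 R :=
  Ring.inverse (pTail z) * pTail w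

noncomputable def divisionStep (z w : 𝕎 R) : 𝕎 R :=
  w - z * divisionQuot z w

theorem divisionStep_eq {z : 𝕎 R} (hz : IsUnit (pTail z)) (w : 𝕎 R) :
    divisionStep z w =
      teichmuller p (w.coeff 0) - teichmuller p (z.coeff 0) * divisionQuot z w := by
  have hw := teichmuller_add_pTail_mul_p w
  have hz' := teichmuller_add_pTail_mul_p z
  have hinv := Ring.mul_inverse_cancel _ hz
  unfold divisionStep divisionQuot
  linear_combination -hw + (Ring.inverse (pTail z) * pTail w) * hz' - (pTail w * p) * hinv

theorem sub_iterate_divisionStep (z x : 𝕎 R) (k : ℕ) :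
    x - (divisionStep z)^[k] x =
      z * ∑ i ∈ Finset.range k, divisionQuot z ((divisionStep z)^[i] x) := by
  induction k with
  | zero => simp
  | succ k ih =>
    rw [Finset.sum_range_succ, mul_add, ← ih, Function.iterate_succ_apply', divisionStep]
    ring

end WittVector

theorem Valued.exists_valuation_sub_le_pow {F : Type*} [Field F] [Valued F ℝ≥0] [CompleteSpace F]
    {c : F} (hc : Valued.v c < 1) {s : ℕ → F}
    (hs : ∀ k l, k ≤ l → Valued.v (s l - s k) ≤ Valued.v c ^ k) :
    ∃ L, ∀ k, Valued.v (L - s k) ≤ Valued.v c ^ k := by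
  have hcauchy : CauchySeq s := by
    rw [(Valued.hasBasis_uniformity F ℝ≥0).cauchySeq_iff]
    intro γ _
    have hγ : 0 < MonoidWithZeroHom.ValueGroup₀.embedding γ.1 := pos_iff_ne_zero.mpr
      ((map_ne_zero_iff _ MonoidWithZeroHom.ValueGroup₀.embedding_injective).mpr γ.ne_zero)
    obtain ⟨N, hN⟩ := exists_pow_lt_of_lt_one hγ hc
    refine ⟨N, fun m hm n hn ↦ ?_⟩
    rw [Set.mem_ofPred_eq, Valuation.restrict_lt_iff_lt_embedding]
    refine lt_of_le_of_lt ?_ hN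
    rw [← sub_sub_sub_cancel_right (s n) (s m) (s N)]
    exact (Valuation.map_sub _ _ _).trans (max_le (hs N n hn) (hs N m hm))
  obtain ⟨L, hL⟩ := cauchySeq_tendsto_of_complete hcauchy
  refine ⟨L, fun k ↦ ?_⟩
  have hball := Valued.isClosed_closedBall F (Valued.v.restrict (c ^ k))
  have hmem := hball.mem_of_tendsto (hL.sub_const (s k))
    (Filter.eventually_atTop.mpr ⟨k, fun l hl ↦ by
      simpa [← map_pow, Valuation.restrict_le_iff] using hs k l hl⟩)
  simpa [← map_pow, Valuation.restrict_le_iff] using hmem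

namespace OK

variable {F : Type*} [Field F] [Valued F ℝ≥0]

theorem mem_span_singleton_iff {a t : OK F} :
    t ∈ Ideal.span {a} ↔ Valued.v (t : F) ≤ Valued.v (a : F) :=
  Ideal.mem_span_singleton.trans (Valuation.integer.integers _).dvd_iff_le

theorem exists_sub_mem_span_pow [CompleteSpace F] {π : OK F} (hπ : Valued.v (π : F) < 1)
    {s : ℕ → OK F} (hs : ∀ k l, k ≤ l → s l - s k ∈ Ideal.span {π ^ k}) :
    ∃ L : OK F, ∀ k, L - s k ∈ Ideal.span {π ^ k} := by
  simp only [mem_span_singleton_iff, AddSubgroupClass.coe_sub, SubmonoidClass.coe_pow,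
    map_pow] at hs ⊢
  obtain ⟨L, hL⟩ := Valued.exists_valuation_sub_le_pow hπ hs
  have hLO : Valued.v L ≤ 1 := by
    rw [← sub_add_cancel L (s 0 : F)]
    exact (Valued.v.map_add _ _).trans (max_le (by simpa using hL 0) (s 0).2)
  exact ⟨⟨L, hLO⟩, hL⟩

theorem eq_zero_of_forall_mem_span_pow {π : OK F} (hπ : Valued.v (π : F) < 1) {t : OK F}
    (ht : ∀ k, t ∈ Ideal.span {π ^ k}) : t = 0 := by
  by_contra h
  have ht0 : 0 < Valued.v (t : F) :=
    (Valuation.integer.integers _).valuation_pos_iff_ne_zero.mpr h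
  obtain ⟨k, hk⟩ := exists_pow_lt_of_lt_one ht0 hπ
  have htk := mem_span_singleton_iff.mp (ht k)
  rw [SubmonoidClass.coe_pow, map_pow] at htk
  exact htk.not_gt hk

instance perfectRing {p : ℕ} [Fact p.Prime] [CharP F p] [PerfectRing F p] :
    PerfectRing (OK F) p :=
  PerfectRing.ofSurjective _ _ fun t ↦ by
    have hroot : Valued.v ((frobeniusEquiv F p).symm t) ≤ 1 := by
      rw [← pow_le_one_iff_of_nonneg zero_le (Fact.out : p.Prime).ne_zero, ← map_pow,
        frobeniusEquiv_symm_pow_p]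
      exact t.2
    exact ⟨⟨_, hroot⟩, Subtype.ext (frobeniusEquiv_symm_pow_p F p t)⟩

end OK

section Stability

open WittVector

variable {p : ℕ} [hp : Fact p.Prime] {F : Type*} [Field F] [Valued F ℝ≥0]

theorem tcNorm_zero (y : WittVector p (OK F)) : tcNorm p F y 0 = Valued.v (y.coeff 0 : F) := by
  simp [tcNorm]

variable [CharP F p] [PerfectRing F p]

theorem tcNorm_le_of_teichmuller_dvd {b : OK F} {y : WittVector p (OK F)}
    (h : teichmuller p b ∣ y) (n : ℕ) : tcNorm p F y n ≤ Valued.v (b : F) := by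
  obtain ⟨c, rfl⟩ := h
  have hpn : (p ^ n : ℕ) ≠ 0 := pow_ne_zero n hp.out.ne_zero
  have hexp : ((p : ℝ))⁻¹ ^ n = ((p ^ n : ℕ) : ℝ)⁻¹ := by push_cast; exact inv_pow _ _
  have hcoeff : Valued.v ((teichmuller p b * c).coeff n : F) ≤ Valued.v (b : F) ^ p ^ n := by
    rw [teichmuller_mul_coeff, Subring.coe_mul, SubmonoidClass.coe_pow, map_mul, map_pow]
    exact mul_le_of_le_one_right' (c.coeff n).2
  calc tcNorm p F (teichmuller p b * c) n
      ≤ (Valued.v (b : F) ^ p ^ n) ^ (((p ^ n : ℕ) : ℝ))⁻¹ := by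
        rw [tcNorm, hexp]
        exact NNReal.rpow_le_rpow hcoeff (by positivity)
    _ = Valued.v (b : F) := NNReal.pow_rpow_inv_natCast _ hpn

theorem isStable_of_teichmuller_dvd {b : OK F} {y : WittVector p (OK F)}
    (h : teichmuller p b ∣ y) (hb : Valued.v (b : F) ≤ Valued.v (y.coeff 0 : F)) :
    IsStable p F y :=
  fun n _ ↦ (tcNorm_le_of_teichmuller_dvd h n).trans (hb.trans_eq (tcNorm_zero y).symm)

theorem isStable_zero : IsStable p F (0 : WittVector p (OK F)) :=
  isStable_of_teichmuller_dvd (b := 0) (by simp) (by simp)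

end Stability

namespace WittVector

variable {p : ℕ} [hp : Fact p.Prime] {F : Type*} [Field F] [Valued F ℝ≥0]

local notation "𝕎" => WittVector p

theorem teichmuller_dvd_teichmuller_of_le {a b : OK F}
    (h : Valued.v (b : F) ≤ Valued.v (a : F)) : teichmuller p a ∣ teichmuller p b :=
  map_dvd _ ((Valuation.integer.integers _).dvd_of_le h)

theorem dvd_of_forall_teichmuller_pow_dvd [CompleteSpace F] {π : OK F}
    (hπ : Valued.v (π : F) < 1) {z x : 𝕎 (OK F)} {Q : ℕ → 𝕎 (OK F)}
    (hQ : ∀ k l, k ≤ l → teichmuller p (π ^ k) ∣ Q l - Q k)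
    (hx : ∀ k, teichmuller p (π ^ k) ∣ x - z * Q k) : z ∣ x := by
  set φ := fun k ↦ map (p := p) (Ideal.Quotient.mk (Ideal.span {π ^ k}))
  have hQ' : ∀ n k l, k ≤ l → (Q l).coeff n - (Q k).coeff n ∈ Ideal.span {π ^ k} := by
    intro n k l hkl
    refine map_mk_eq_map_mk_iff.mp ?_ n
    rw [← sub_eq_zero, ← map_sub]
    exact map_mk_span_eq_zero_of_teichmuller_dvd (hQ k l hkl)
  choose L hL using fun n ↦ OK.exists_sub_mem_span_pow hπ (hQ' n)
  refine ⟨mk p L, sub_eq_zero.mp ?_⟩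
  ext1 n
  rw [zero_coeff]
  refine OK.eq_zero_of_forall_mem_span_pow hπ fun k ↦ ?_
  have hq : φ k (mk p L) = φ k (Q k) := map_mk_eq_map_mk_iff.mpr fun n ↦ hL n k
  have hdiff : φ k (x - z * mk p L) = φ k 0 := by
    simp only [φ, map_sub, map_mul] at hq ⊢
    rw [hq, ← map_mul, ← map_sub, map_mk_span_eq_zero_of_teichmuller_dvd (hx k), map_zero]
  simpa using map_mk_eq_map_mk_iff.mp hdiff n

variable [CharP F p] [PerfectRing F p]

theorem isUnit_pTail {z : 𝕎 (OK F)} (hz : Valued.v (z.coeff 1 : F) = 1) : IsUnit (pTail z) := by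
  have hpow : ((pTail z).coeff 0 : F) ^ p = z.coeff 1 := by
    rw [← SubmonoidClass.coe_pow, pTail_coeff_pow]
  refine isUnit_of_isUnit_coeff_zero ((Valuation.integer.integers _).isUnit_of_one' ?_)
  change Valued.v ((pTail z).coeff 0 : F) = 1
  rw [← pow_eq_one_iff_of_nonneg zero_le hp.out.ne_zero, ← map_pow, hpow, hz]

theorem isStable_or_teichmuller_dvd_divisionStep {z w : 𝕎 (OK F)} (hz : IsUnit (pTail z))
    {a : OK F} (hw : teichmuller p a ∣ w) :
    IsStable p F (divisionStep z w) ∨ teichmuller p (z.coeff 0 * a) ∣ divisionStep z w := by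
  obtain ⟨c, hc⟩ :
      teichmuller p (z.coeff 0 * a) ∣ teichmuller p (z.coeff 0) * divisionQuot z w := by
    rw [map_mul]
    exact mul_dvd_mul_left _ ((teichmuller_dvd_pTail hw).mul_left _)
  rw [divisionStep_eq hz, hc]
  by_cases hsmall : Valued.v (w.coeff 0 : F) ≤ Valued.v ((z.coeff 0 * a : OK F) : F)
  · exact .inr (dvd_sub (teichmuller_dvd_teichmuller_of_le hsmall) (dvd_mul_right _ _))
  · push Not at hsmall
    refine .inl (isStable_of_teichmuller_dvd (b := w.coeff 0) (dvd_sub dvd_rfl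
      ((teichmuller_dvd_teichmuller_of_le hsmall.le).mul_right _)) (le_of_eq ?_))
    have hcorr : Valued.v ((z.coeff 0 * a * c.coeff 0 : OK F) : F) < Valued.v (w.coeff 0 : F) :=
      lt_of_le_of_lt (by simpa using mul_le_of_le_one_right' (c.coeff 0).2) hsmall
    rw [sub_coeff_zero, mul_coeff_zero, teichmuller_coeff_zero, teichmuller_coeff_zero,
      AddSubgroupClass.coe_sub, Valuation.map_sub_eq_of_lt_left _ hcorr]

theorem teichmuller_pow_dvd_iterate_divisionStep {z : 𝕎 (OK F)} (hz : IsUnit (pTail z))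
    (x : 𝕎 (OK F)) (h : ∀ k, ¬IsStable p F ((divisionStep z)^[k + 1] x)) (k : ℕ) :
    teichmuller p (z.coeff 0 ^ k) ∣ (divisionStep z)^[k] x := by
  induction k with
  | zero => simp
  | succ k ih =>
    have hk := h k
    rw [Function.iterate_succ_apply'] at hk ⊢
    rw [pow_succ']
    exact (isStable_or_teichmuller_dvd_divisionStep hz ih).resolve_left hk

theorem dvd_of_forall_not_isStable_iterate_divisionStep [CompleteSpace F] {z : 𝕎 (OK F)}
    (hz₀ : Valued.v (z.coeff 0 : F) < 1) (hz : IsUnit (pTail z)) (x : 𝕎 (OK F))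
    (h : ∀ k, ¬IsStable p F ((divisionStep z)^[k + 1] x)) : z ∣ x := by
  have hX := teichmuller_pow_dvd_iterate_divisionStep hz x h
  refine dvd_of_forall_teichmuller_pow_dvd hz₀
    (Q := fun k ↦ ∑ i ∈ Finset.range k, divisionQuot z ((divisionStep z)^[i] x)) ?_ ?_
  · intro k l hkl
    rw [← Finset.sum_Ico_eq_sub _ hkl]
    refine Finset.dvd_sum fun i hi ↦ ?_
    have hki : teichmuller p (z.coeff 0 ^ k) ∣ teichmuller p (z.coeff 0 ^ i) :=
      map_dvd _ (pow_dvd_pow _ (Finset.mem_Ico.mp hi).1)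
    exact hki.trans ((teichmuller_dvd_pTail (hX i)).mul_left _)
  · intro k
    rw [← sub_iterate_divisionStep, sub_sub_cancel]
    exact hX k

end WittVector

/-- Division lemma: for any primitive `z ∈ W(o_F)`, every class of `W(o_F)/(z)` is
represented by a stable element. -/
theorem stable_representative (p : ℕ) [Fact p.Prime] (F : Type*) [Field F]
    [Valued F ℝ≥0] [CompleteSpace F] [ExpChar F p] [PerfectRing F p]
    (z : WittVector p (OK F)) (hz : IsPrimitive p F z) (x : WittVector p (OK F)) :
    ∃ y : WittVector p (OK F), IsStable p F y ∧ z ∣ (x - y) := by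
  have : CharP F p := by
    cases ‹ExpChar F p› with
    | zero => exact absurd Fact.out Nat.not_prime_one
    | prime => assumption
  have hu : IsUnit (WittVector.pTail z) := WittVector.isUnit_pTail hz.2
  by_cases hstable : ∃ k, IsStable p F ((WittVector.divisionStep z)^[k] x)
  · obtain ⟨k, hk⟩ := hstable
    exact ⟨_, hk, Dvd.intro _ (WittVector.sub_iterate_divisionStep z x k).symm⟩
  · push Not at hstable
    have hz₀ : Valued.v (z.coeff 0 : F) < 1 := by
      rw [hz.1]
      exact inv_lt_one_of_one_lt₀ (by exact_mod_cast (Fact.out : p.Prime).one_lt)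
    refine ⟨0, isStable_zero, ?_⟩
    rw [sub_zero]
    exact WittVector.dvd_of_forall_not_isStable_iterate_divisionStep hz₀ hu x
      fun k ↦ hstable (k + 1)
end

section
/- An element of W(o_F) is stable if and only if it equals a unit of W(o_F) times a Teichmüller lift [x̄] for some x̄ ∈ o_F. -/
open scoped NNReal ENNReal

set_option synthInstance.maxHeartbeats 1000000
set_option maxHeartbeats 1000000

/-!
Since `x̄_n = x_n^(p⁻ⁿ)`, stability says `|x_n| ≤ |x_0|^(pⁿ)` for all `n`. In Witt coordinates the
identity `[a]·Σ pⁿ [ȳ_n] = Σ pⁿ [ā ȳ_n]` reads `([a]·y)_n = a^(pⁿ) y_n`; both sides are integer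
polynomials in `a` and the `y_n`, so it suffices to compare ghost components over `ℚ`. If
`x_0 ≠ 0`, the vector `y` with `y_n = x_n / x_0^(pⁿ)` lies in `W(o_F)` and has `y_0 = 1`, so it
is a unit and `x = y·[x_0]`; if `x_0 = 0`, stability forces `x = 0`. Conversely a unit `u` has
`|u_0| = 1`, so `|(u·[a])_n| = |a|^(pⁿ) |u_n| ≤ |(u·[a])_0|^(pⁿ)`.
-/

namespace WittVector

variable {p : ℕ} [Fact p.Prime]

local notation "𝕎" => WittVector p

noncomputable def frobeniusScale {R : Type*} [CommRing R] (a : R) (x : 𝕎 R) : 𝕎 R :=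
  mk p fun n => a ^ p ^ n * x.coeff n

theorem ghostComponent_frobeniusScale {R : Type*} [CommRing R] (a : R) (x : 𝕎 R) (n : ℕ) :
    ghostComponent n (frobeniusScale a x) = a ^ p ^ n * ghostComponent n x := by
  rw [ghostComponent_apply, ghostComponent_apply, aeval_wittPolynomial, aeval_wittPolynomial,
    Finset.mul_sum]
  refine Finset.sum_congr rfl fun i hi => ?_
  have hpow : (a ^ p ^ i) ^ p ^ (n - i) = a ^ p ^ n := by
    rw [← pow_mul, ← pow_add, Nat.add_sub_cancel' (Finset.mem_range_succ_iff.mp hi)]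
  simp only [frobeniusScale, coeff_mk, mul_pow, hpow]
  ring

theorem map_frobeniusScale {R S : Type*} [CommRing R] [CommRing S] (f : R →+* S) (a : R)
    (x : 𝕎 R) : map f (frobeniusScale a x) = frobeniusScale (f a) (map f x) := by
  ext n
  simp [frobeniusScale, map_coeff]

theorem teichmuller_mul_eq_frobeniusScale_of_invertible {R : Type*} [CommRing R]
    [Invertible (p : R)] (a : R) (x : 𝕎 R) : teichmuller p a * x = frobeniusScale a x := by
  apply (ghostMap.bijective_of_invertible p R).1
  rw [map_mul]
  ext1 n
  simp only [Pi.mul_apply, ghostMap_apply, ghostComponent_frobeniusScale,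
    ghostComponent_teichmuller]

theorem teichmuller_mul_eq_frobeniusScale_mvPolynomial {σ : Type*} (a : MvPolynomial σ ℤ)
    (x : 𝕎 (MvPolynomial σ ℤ)) : teichmuller p a * x = frobeniusScale a x := by
  refine map_injective (MvPolynomial.map (Int.castRingHom ℚ))
    (MvPolynomial.map_injective _ Int.cast_injective) ?_
  rw [map_mul, map_teichmuller, map_frobeniusScale,
    teichmuller_mul_eq_frobeniusScale_of_invertible]

theorem teichmuller_mul_eq_frobeniusScale {R : Type*} [CommRing R] (a : R) (x : 𝕎 R) :
    teichmuller p a * x = frobeniusScale a x := by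
  obtain ⟨a, rfl⟩ := MvPolynomial.counit_surjective R a
  obtain ⟨x, rfl⟩ := map_surjective _ (MvPolynomial.counit_surjective R) x
  rw [← map_teichmuller, ← map_mul, teichmuller_mul_eq_frobeniusScale_mvPolynomial,
    map_frobeniusScale]

theorem coeff_teichmuller_mul {R : Type*} [CommRing R] (a : R) (x : 𝕎 R) (n : ℕ) :
    (teichmuller p a * x).coeff n = a ^ p ^ n * x.coeff n := by
  rw [teichmuller_mul_eq_frobeniusScale, frobeniusScale, coeff_mk]

theorem coeff_mul_teichmuller {R : Type*} [CommRing R] (x : 𝕎 R) (a : R) (n : ℕ) :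
    (x * teichmuller p a).coeff n = a ^ p ^ n * x.coeff n := by
  rw [mul_comm, coeff_teichmuller_mul]

end WittVector

open WittVector

section Valuation

variable {p : ℕ} [hp : Fact p.Prime] {K Γ₀ : Type*} [Field K]
  [LinearOrderedCommGroupWithZero Γ₀] {v : Valuation K Γ₀}

local notation "𝕎" => WittVector p

theorem valuation_coeff_zero_of_isUnit {x : 𝕎 v.integer} (hx : IsUnit x) :
    v (x.coeff 0 : K) = 1 :=
  (Valuation.integer.integers v).isUnit_iff_valuation_eq_one.mp (constantCoeff.isUnit_map hx)

theorem valuation_coeff_unit_mul_teichmuller_le (u : (𝕎 v.integer)ˣ) (a : v.integer)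
    (n : ℕ) :
    v (((u : 𝕎 v.integer) * teichmuller p a).coeff n : K) ≤
      v (((u : 𝕎 v.integer) * teichmuller p a).coeff 0 : K) ^ p ^ n := by
  have hu : v ((u : 𝕎 v.integer).coeff n : K) ≤ 1 := ((u : 𝕎 v.integer).coeff n).2
  simp only [coeff_mul_teichmuller, Subring.coe_mul, SubmonoidClass.coe_pow, map_mul, map_pow,
    valuation_coeff_zero_of_isUnit u.isUnit, pow_zero, pow_one, mul_one]
  exact mul_le_of_le_one_right' hu

theorem exists_eq_teichmuller_mul_of_valuation_coeff_le {x : 𝕎 v.integer} (hx0 : x.coeff 0 ≠ 0)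
    (hx : ∀ n, v (x.coeff n : K) ≤ v (x.coeff 0 : K) ^ p ^ n) :
    ∃ y : 𝕎 v.integer, y.coeff 0 = 1 ∧ x = teichmuller p (x.coeff 0) * y := by
  have hx0' : (x.coeff 0 : K) ≠ 0 := by exact_mod_cast hx0
  have hmem (n : ℕ) : (x.coeff n : K) / (x.coeff 0 : K) ^ p ^ n ∈ v.integer := by
    rw [Valuation.mem_integer_iff, map_div₀, map_pow]
    exact div_le_one_of_le₀ (hx n) zero_le
  refine ⟨mk p fun n => ⟨_, hmem n⟩, Subtype.ext ?_, ext fun n => Subtype.ext ?_⟩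
  · simp [hx0']
  · simp [coeff_teichmuller_mul, mul_div_cancel₀ _ (pow_ne_zero _ hx0')]

theorem exists_eq_unit_mul_teichmuller_of_valuation_coeff_le [CharP v.integer p]
    {x : 𝕎 v.integer} (hx : ∀ n, v (x.coeff n : K) ≤ v (x.coeff 0 : K) ^ p ^ n) :
    ∃ (u : (𝕎 v.integer)ˣ) (a : v.integer), x = (u : 𝕎 v.integer) * teichmuller p a := by
  by_cases hx0 : x.coeff 0 = 0
  · have hzero : x = 0 := ext fun n => by
      simpa [hx0, zero_pow (pow_ne_zero n hp.out.ne_zero)] using hx n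
    exact ⟨1, 0, by rw [hzero, teichmuller_zero, mul_zero]⟩
  · obtain ⟨y, hy0, hxy⟩ := exists_eq_teichmuller_mul_of_valuation_coeff_le hx0 hx
    refine ⟨mkUnit (a := 1) hy0, x.coeff 0, ?_⟩
    rw [coe_mkUnit, mul_comm, ← hxy]

end Valuation

section Stable

variable {p : ℕ} [hp : Fact p.Prime] {F : Type*} [Field F] [Valued F ℝ≥0]

local notation "𝕎" => WittVector p

theorem tcNorm_le_tcNorm_zero_iff (x : 𝕎 (OK F)) (n : ℕ) :
    tcNorm p F x n ≤ tcNorm p F x 0 ↔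
      Valued.v (x.coeff n : F) ≤ Valued.v (x.coeff 0 : F) ^ p ^ n := by
  have hexp : (0 : ℝ) < (p : ℝ)⁻¹ ^ n := by
    have : (0 : ℝ) < p := by exact_mod_cast hp.out.pos
    positivity
  have hroot :
      (Valued.v (x.coeff 0 : F) ^ p ^ n) ^ ((p : ℝ)⁻¹ ^ n) = Valued.v (x.coeff 0 : F) := by
    rw [← NNReal.rpow_natCast, ← NNReal.rpow_mul, Nat.cast_pow, ← mul_pow,
      mul_inv_cancel₀ (by exact_mod_cast hp.out.ne_zero), one_pow, NNReal.rpow_one]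
  rw [tcNorm, tcNorm, pow_zero, NNReal.rpow_one]
  conv_lhs => rw [← hroot]
  exact NNReal.rpow_le_rpow_iff hexp

theorem isStable_iff (x : 𝕎 (OK F)) :
    IsStable p F x ↔ ∀ n, Valued.v (x.coeff n : F) ≤ Valued.v (x.coeff 0 : F) ^ p ^ n := by
  refine ⟨fun hx n => ?_, fun hx n _ => (tcNorm_le_tcNorm_zero_iff x n).mpr (hx n)⟩
  rcases n.eq_zero_or_pos with rfl | hn
  · simp
  · exact (tcNorm_le_tcNorm_zero_iff x n).mp (hx n hn)

end Stable

theorem stable_iff_unit_mul_teichmuller_general (p : ℕ) [Fact p.Prime] (F : Type*) [Field F]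
    [Valued F ℝ≥0] [ExpChar F p]
    (x : WittVector p (OK F)) :
    IsStable p F x ↔
      ∃ (u : (WittVector p (OK F))ˣ) (a : OK F),
        x = (u : WittVector p (OK F)) * WittVector.teichmuller p a := by
  have : CharP F p := by
    rcases ‹ExpChar F p› with _ | _
    · exact absurd rfl (Nat.Prime.ne_one Fact.out)
    · assumption
  have : CharP (OK F) p := CharP.subring' F p (OK F)
  rw [isStable_iff]
  refine ⟨exists_eq_unit_mul_teichmuller_of_valuation_coeff_le, ?_⟩
  rintro ⟨u, a, rfl⟩
  exact valuation_coeff_unit_mul_teichmuller_le u a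

/-- An element of `W(o_F)` is stable if and only if it is a unit times a Teichmüller
lift. -/
theorem stable_iff_unit_mul_teichmuller (p : ℕ) [Fact p.Prime] (F : Type*) [Field F]
    [Valued F ℝ≥0] [CompleteSpace F] [ExpChar F p] [PerfectRing F p]
    (x : WittVector p (OK F)) :
    IsStable p F x ↔
      ∃ (u : (WittVector p (OK F))ˣ) (a : OK F),
        x = (u : WittVector p (OK F)) * WittVector.teichmuller p a :=
  stable_iff_unit_mul_teichmuller_general p F x
end
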